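/- arXiv:2406.19426 — 4 statements merged into one kernel-verified Lean document; each statement's English description precedes it below -/
import Mathlib

section
/- Parameter independence together with perfect correlations does not imply determinism: there exists a family of conditional distributions p(a,b|x,y,λ) over outcomes a,b ∈ {−1,+1} and settings x,y ∈ {0,1} that satisfies parameter independence and perfect (anti)correlation for every setting pair, but for which p(a|x,y,λ) = 1/2 for every outcome, so no outcome is predetermined. -/
/-- Parameter independence + perfect correlations does not imply determinism:
there is a family of conditional distributions p(a,b|x,y,λ) with outcomes in {-1,1},
settings in Fin 2 and a (trivial) hidden variable, satisfying parameter independence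
(indeed every single-outcome marginal equals 1/2) and perfect correlation for each
setting pair, but with no predetermined outcome. -/
theorem stmt_2 :
    ∃ p : ℤ → ℤ → Fin 2 → Fin 2 → Unit → ℝ,
      -- valid conditional probabilities
      (∀ (a b : ℤ) (x y : Fin 2) (l : Unit), 0 ≤ p a b x y l) ∧
      (∀ (x y : Fin 2) (l : Unit),
        ∑ a ∈ ({-1, 1} : Finset ℤ), ∑ b ∈ ({-1, 1} : Finset ℤ), p a b x y l = 1) ∧
      -- parameter independence: each marginal is 1/2, independent of the remote setting
      (∀ (x y : Fin 2) (l : Unit) (a : ℤ), a ∈ ({-1, 1} : Finset ℤ) →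
        ∑ b ∈ ({-1, 1} : Finset ℤ), p a b x y l = 1 / 2) ∧
      (∀ (x y : Fin 2) (l : Unit) (b : ℤ), b ∈ ({-1, 1} : Finset ℤ) →
        ∑ a ∈ ({-1, 1} : Finset ℤ), p a b x y l = 1 / 2) ∧
      -- perfect correlation: for each setting pair a bijection of outcomes carries all mass
      (∀ (x y : Fin 2), ∃ f : ℤ → ℤ,
        Set.BijOn f ({-1, 1} : Set ℤ) ({-1, 1} : Set ℤ) ∧
        ∀ (l : Unit) (a b : ℤ), a ∈ ({-1, 1} : Finset ℤ) → b ∈ ({-1, 1} : Finset ℤ) →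
          b ≠ f a → p a b x y l = 0) ∧
      -- no determinism: no outcome pair has probability 1
      ¬ ∃ (x y : Fin 2) (l : Unit) (a b : ℤ), a ∈ ({-1, 1} : Finset ℤ) ∧
          b ∈ ({-1, 1} : Finset ℤ) ∧ p a b x y l = 1 := by
  refine ⟨fun a b _ _ _ => if a = b then 1/2 else 0, ?_, ?_, ?_, ?_, ?_, ?_⟩
  · intro a b x y l; positivity
  · intro x y l; norm_num
  · intro x y l a ha
    fin_cases ha <;> norm_num
  · intro x y l b hb
    fin_cases hb <;> norm_num
  · intro x y
    refine ⟨id, Set.bijOn_id _, ?_⟩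
    intro l a b ha hb hne
    simp only [id] at hne
    simp [Ne.symm hne]
  · rintro ⟨x, y, l, a, b, ha, hb, hp⟩
    fin_cases ha <;> fin_cases hb <;> norm_num at hp
end

section
/- Measurement independence implies measurement accessibility, but not conversely: (i) if p(λ|x,y) = p(λ) for all x,y and p(λ)>0, then p(λ|x,y) > 0 for all x,y with p(x,y)>0; (ii) there exists a joint distribution p(x,y,λ) on finite types in which p(x,y|λ) > 0 whenever p(λ) > 0 (accessibility) yet p(λ|x,y) ≠ p(λ) for some x,y,λ (failure of independence). -/
/-- (i) Measurement independence implies measurement accessibility;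
(ii) the converse fails: some joint distribution satisfies accessibility but
not independence. -/
theorem stmt_6 :
    -- (i) measurement independence implies p(λ|x,y) > 0 whenever p(λ) > 0 and p(x,y) > 0
    (∀ (X Y Λ : Type) [Fintype X] [Fintype Y] [Fintype Λ] (p : X × Y × Λ → ℝ),
      (∀ z, 0 ≤ p z) → (∑ z, p z = 1) →
      (∀ (x : X) (y : Y) (l : Λ), 0 < ∑ l', p (x, y, l') →
        p (x, y, l) / (∑ l', p (x, y, l')) = ∑ x', ∑ y', p (x', y', l)) →
      (∀ (x : X) (y : Y) (l : Λ), 0 < ∑ x', ∑ y', p (x', y', l) →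
        0 < ∑ l', p (x, y, l') →
        0 < p (x, y, l) / (∑ l', p (x, y, l')))) ∧
    -- (ii) accessibility does not imply independence
    (∃ (X Y Λ : Type) (_ : Fintype X) (_ : Fintype Y) (_ : Fintype Λ)
        (p : X × Y × Λ → ℝ),
      (∀ z, 0 ≤ p z) ∧ (∑ z, p z = 1) ∧
      -- measurement accessibility: p(x,y|λ) > 0 whenever p(λ) > 0
      (∀ (x : X) (y : Y) (l : Λ), 0 < ∑ x', ∑ y', p (x', y', l) →
        0 < p (x, y, l) / (∑ x', ∑ y', p (x', y', l))) ∧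
      -- failure of measurement independence
      (∃ (x : X) (y : Y) (l : Λ), 0 < ∑ l', p (x, y, l') ∧
        p (x, y, l) / (∑ l', p (x, y, l')) ≠ ∑ x', ∑ y', p (x', y', l))) := by
  constructor
  · intro X Y Λ _ _ _ p hpos hsum hind x y l hl hxy
    rw [hind x y l hxy]
    exact hl
  · refine ⟨Bool, Unit, Bool, inferInstance, inferInstance, inferInstance,
      fun z => if z.1 = z.2.2 then 0.4 else 0.1, ?_, ?_, ?_, ?_⟩
    · intro z; dsimp only; split <;> norm_num
    · simp [Fintype.sum_prod_type]
      norm_num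
    · intro x y l _
      have h1 : (∑ x', ∑ y' : Unit, if x' = l then (0.4:ℝ) else 0.1) = 0.5 := by
        simp [Fintype.sum_bool]; cases l <;> norm_num
      dsimp only
      rw [h1]
      by_cases h : x = l <;> simp [h] <;> norm_num
    · refine ⟨true, (), true, ?_, ?_⟩
      · simp [Fintype.sum_bool]; norm_num
      · have h1 : (∑ x', ∑ y' : Unit, if x' = true then (0.4:ℝ) else 0.1) = 0.5 := by
          simp [Fintype.sum_bool]; norm_num
        have h2 : (∑ l', if true = l' then (0.4:ℝ) else 0.1) = 0.5 := by
          simp [Fintype.sum_bool]; norm_num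
        rw [h1, h2]
        norm_num
end

section
/- The quantum singlet-type correlation E(x,y) = −x·y cannot be reproduced by any deterministic parameter-independent model with measurement-independent hidden variables for four settings: for any finite hidden variable space Λ with pmf μ and response functions A : Fin 2 → Λ → {−1,1}, B : Fin 2 → Λ → {−1,1}, the CHSH combination ∑_λ μ(λ)·[A(0,λ)B(0,λ) + A(0,λ)B(1,λ) + A(1,λ)B(0,λ) − A(1,λ)B(1,λ)] has absolute value at most 2, whereas there exist quantum correlations achieving the value 2√2 > 2. -/
/-- Any deterministic parameter-independent measurement-independent hidden variable
model satisfies the CHSH bound |S| ≤ 2, whereas quantum correlations can reach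
2√2 > 2. -/
theorem stmt_12 :
    (∀ (Λ : Type) [Fintype Λ] (μ : Λ → ℝ),
      (∀ l, 0 ≤ μ l) → (∑ l, μ l = 1) →
      ∀ (A B : Fin 2 → Λ → ℝ),
        (∀ j l, A j l = 1 ∨ A j l = -1) → (∀ k l, B k l = 1 ∨ B k l = -1) →
        |∑ l, μ l * (A 0 l * B 0 l + A 0 l * B 1 l + A 1 l * B 0 l - A 1 l * B 1 l)| ≤ 2) ∧
    (∃ E : Fin 2 → Fin 2 → ℝ,
      (∀ j k, E j k = Real.sqrt 2 / 2 ∨ E j k = -(Real.sqrt 2 / 2)) ∧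
      E 0 0 + E 0 1 + E 1 0 - E 1 1 = 2 * Real.sqrt 2 ∧
      (2 : ℝ) < 2 * Real.sqrt 2) := by
  constructor
  · intro Λ _ μ hμ hsum A B hA hB
    have key : ∀ l, |A 0 l * B 0 l + A 0 l * B 1 l + A 1 l * B 0 l - A 1 l * B 1 l| ≤ 2 := by
      intro l
      rcases hA 0 l with h0 | h0 <;> rcases hA 1 l with h1 | h1 <;>
        rcases hB 0 l with g0 | g0 <;> rcases hB 1 l with g1 | g1 <;>
        rw [h0, h1, g0, g1] <;> norm_num
    calc |∑ l, μ l * (A 0 l * B 0 l + A 0 l * B 1 l + A 1 l * B 0 l - A 1 l * B 1 l)|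
        ≤ ∑ l, |μ l * (A 0 l * B 0 l + A 0 l * B 1 l + A 1 l * B 0 l - A 1 l * B 1 l)| :=
          Finset.abs_sum_le_sum_abs _ _
      _ ≤ ∑ l, μ l * 2 := by
          apply Finset.sum_le_sum
          intro l _
          rw [abs_mul, abs_of_nonneg (hμ l)]
          exact mul_le_mul_of_nonneg_left (key l) (hμ l)
      _ = 2 := by rw [← Finset.sum_mul, hsum]; ring
  · refine ⟨fun j k => if j = 1 ∧ k = 1 then -(Real.sqrt 2 / 2) else Real.sqrt 2 / 2, ?_, ?_, ?_⟩
    · intro j k; by_cases h : j = 1 ∧ k = 1 <;> simp [h]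
    · norm_num; ring
    · nlinarith [Real.sq_sqrt (by norm_num : (2:ℝ) ≥ 0), Real.sqrt_nonneg 2]
end

section
/- A measurement-dependent local deterministic model with uniform setting accessibility bound ℓ > 1/4 on two binary settings per side cannot reach the PR-box: for any finite Λ with pmf p(λ), conditional setting distributions p(x,y|λ) ≥ ℓ for all four setting pairs (x,y) ∈ {0,1}², and deterministic responses A(x,λ), B(y,λ) ∈ {−1,1}, the resulting behavior p(a,b|x,y) cannot satisfy all four PR-box constraints a·b = (−1)^{x·y} with probability 1. -/
/-!
At a hidden state `λ` of positive weight every setting pair has positive weight too, so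
probability one for all four PR-box constraints forces them to hold pointwise at `λ`.
No real numbers satisfy them: the product of the four left sides `A x λ * B y λ` is
`(A 0 λ * A 1 λ * B 0 λ * B 1 λ) ^ 2 ≥ 0`, while the product of the right sides is `-1`.
-/

open Finset

theorem not_forall_mul_eq_neg_one_pow_mul {R : Type*} [CommRing R] [LinearOrder R]
    [IsStrictOrderedRing R] (a b : Fin 2 → R) :
    ¬ ∀ x y : Fin 2, a x * b y = (-1 : R) ^ ((x : ℕ) * (y : ℕ)) := by
  intro h
  have hprod : (a 0 * b 0) * (a 0 * b 1) * (a 1 * b 0) * (a 1 * b 1) = -1 := by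
    simp [h]
  nlinarith [sq_nonneg (a 0 * a 1 * b 0 * b 1)]

theorem of_sum_mul_ite_eq_sum {ι R : Type*} [Fintype ι] [Ring R] [PartialOrder R]
    [IsOrderedRing R] {w : ι → R} (hw : ∀ i, 0 ≤ w i) {P : ι → Prop} [DecidablePred P]
    (h : ∑ i, w i * (if P i then 1 else 0) = ∑ i, w i) {j : ι} (hj : 0 < w j) : P j := by
  have hle : ∀ i ∈ univ, w i * (if P i then 1 else 0) ≤ w i := fun i _ => by
    split_ifs <;> simp [hw i]
  by_contra hPj
  have := (sum_eq_sum_iff_of_le hle).mp h j (mem_univ j)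
  simp only [hPj, if_false, mul_zero] at this
  exact hj.ne this

theorem stmt_19_general {Λ : Type*} [Fintype Λ]
    (p : Λ → ℝ) (hpnn : ∀ l, 0 ≤ p l) (hpsum : ∑ l, p l = 1)
    (q : Λ → Fin 2 × Fin 2 → ℝ) (hqnn : ∀ l s, 0 ≤ q l s)
    (ℓ : ℝ) (hℓ : 1 / 4 < ℓ)
    (hacc : ∀ l, 0 < p l → ∀ s, ℓ ≤ q l s)
    (A B : Fin 2 → Λ → ℝ) :
    ¬ ∀ x y : Fin 2,
      (∑ l, p l * q l (x, y) *
        (if A x l * B y l = (-1 : ℝ) ^ ((x : ℕ) * (y : ℕ)) then 1 else 0)) =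
      ∑ l, p l * q l (x, y) := by
  intro hpr
  obtain ⟨l, -, hl⟩ : ∃ l ∈ univ, (0 : ℝ) < p l :=
    exists_lt_of_sum_lt (by simp [hpsum])
  refine not_forall_mul_eq_neg_one_pow_mul (fun x => A x l) (fun y => B y l) fun x y => ?_
  have hq : 0 < q l (x, y) := by linarith [hacc l hl (x, y)]
  exact of_sum_mul_ite_eq_sum (fun l' => mul_nonneg (hpnn l') (hqnn l' _)) (hpr x y)
    (mul_pos hl hq)

/-- A measurement-dependent local deterministic model with uniform setting
accessibility bound ℓ > 1/4 cannot reproduce the PR-box: it is impossible that for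
every setting pair (x,y) the constraint A(x,λ)·B(y,λ) = (-1)^{x·y} holds with
conditional probability 1. -/
theorem stmt_19 {Λ : Type*} [Fintype Λ]
    (p : Λ → ℝ) (hpnn : ∀ l, 0 ≤ p l) (hpsum : ∑ l, p l = 1)
    (q : Λ → Fin 2 × Fin 2 → ℝ) (hqnn : ∀ l s, 0 ≤ q l s)
    (hqsum : ∀ l, ∑ s, q l s = 1)
    (ℓ : ℝ) (hℓ : 1 / 4 < ℓ)
    (hacc : ∀ l, 0 < p l → ∀ s, ℓ ≤ q l s)
    (A B : Fin 2 → Λ → ℝ)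
    (hA : ∀ x l, A x l = 1 ∨ A x l = -1) (hB : ∀ y l, B y l = 1 ∨ B y l = -1) :
    ¬ ∀ x y : Fin 2,
      (∑ l, p l * q l (x, y) *
        (if A x l * B y l = (-1 : ℝ) ^ ((x : ℕ) * (y : ℕ)) then 1 else 0)) =
      ∑ l, p l * q l (x, y) :=
  stmt_19_general p hpnn hpsum q hqnn ℓ hℓ hacc A B
end
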